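/- Let F be an algebraically closed field of characteristic p and λ ∈ Z_p[[t_1,t_2]]. Suppose χ: Z_p[[t_1,t_2]] → F[[t]] is a continuous ring homomorphism with χ(t_1) = 0 and χ(λ) ≠ 0, say χ(λ) has t-adic valuation m. If μ: Z_p[[t_1,t_2]] → F[[t]] is a continuous ring homomorphism satisfying μ(1+t_1) = μ((1+t_2)^{p^j}), μ(t_2) = χ(t_2), and p^j > m, then μ(λ) ≠ 0. -/

import Mathlib

/-!
Write `N = p ^ j`. In characteristic `p`, `μ(1 + t₁) = (1 + μ(t₂))^N` gives `μ(t₁) = χ(t₂)^N`, and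
`χ(t₂)` has no constant term because `t₂` is topologically nilpotent and `χ` is continuous; so
`χ ≡ μ (mod t^N)` on both variables. The elements on which `χ ≡ μ (mod t^N)` form a closed subring,
and a closed subring of `ℤ_p[[t₁,t₂]]` containing the variables is everything, since `ℤ` is dense in
`ℤ_p` and polynomials are dense in power series. Hence `μ(λ) ≡ χ(λ) ≢ 0 (mod t^N)` as `m < N`.
-/

/-- The product topology on `ℤ_p[[t₁,t₂]]` (coefficientwise convergence,
with the `p`-adic topology on the coefficients). -/
noncomputable def mvTop (p : ℕ) [Fact p.Prime] : TopologicalSpace (MvPowerSeries (Fin 2) ℤ_[p]) :=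
  inferInstanceAs (TopologicalSpace ((Fin 2 →₀ ℕ) → ℤ_[p]))

/-- The product topology on `F[[t]]` with `F` discrete; this is the `t`-adic topology. -/
def psTop (F : Type*) : TopologicalSpace (PowerSeries F) :=
  letI : TopologicalSpace F := ⊥
  inferInstanceAs (TopologicalSpace ((Unit →₀ ℕ) → F))

namespace MvPowerSeries

open WithPiTopology

variable {σ R : Type*} [CommRing R] [TopologicalSpace R]

theorem subring_eq_top_of_isClosed (hR : DenseRange (Int.cast : ℤ → R))
    {S : Subring (MvPowerSeries σ R)} (hS : IsClosed (S : Set (MvPowerSeries σ R)))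
    (hX : ∀ i, X i ∈ S) : S = ⊤ := by
  have hC (r : R) : C r ∈ S :=
    hR.induction_on r (hS.preimage continuous_C) fun n => by simp
  have hpoly (φ : MvPolynomial σ R) : (φ : MvPowerSeries σ R) ∈ S := by
    induction φ using MvPolynomial.induction_on with
    | C r => simpa using hC r
    | add φ ψ hφ hψ => simpa using add_mem hφ hψ
    | mul_X φ i hφ => simpa using mul_mem hφ (hX i)
  exact eq_top_iff.2 fun f _ => denseRange_toMvPowerSeries.induction_on f hS hpoly

variable {K : Type*} [CommRing K] [TopologicalSpace K]

theorem X_dvd_map_X [IsReduced K] [DiscreteTopology K] {φ : MvPowerSeries σ R →+* PowerSeries K}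
    (hφ : Continuous φ) (i : σ) : PowerSeries.X ∣ φ (X i) := by
  rw [PowerSeries.X_dvd_iff]
  have hXi : IsTopologicallyNilpotent (X i : MvPowerSeries σ R) :=
    isTopologicallyNilpotent_of_constantCoeff_zero (constantCoeff_X i)
  exact ((PowerSeries.WithPiTopology.isTopologicallyNilpotent_iff_constantCoeff_isNilpotent _).1
    (hXi.map hφ)).eq_zero

theorem X_pow_dvd_map_sub_map [T2Space K] (hR : DenseRange (Int.cast : ℤ → R))
    {φ ψ : MvPowerSeries σ R →+* PowerSeries K} (hφ : Continuous φ) (hψ : Continuous ψ) {n : ℕ}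
    (hX : ∀ i, PowerSeries.X ^ n ∣ φ (X i) - ψ (X i)) (f : MvPowerSeries σ R) :
    PowerSeries.X ^ n ∣ φ f - ψ f := by
  let q := Ideal.Quotient.mk (Ideal.span {(PowerSeries.X : PowerSeries K) ^ n})
  have hmem (g : MvPowerSeries σ R) :
      g ∈ (q.comp φ).eqLocus (q.comp ψ) ↔ PowerSeries.X ^ n ∣ φ g - ψ g :=
    Ideal.Quotient.eq.trans Ideal.mem_span_singleton
  have hclosed : IsClosed ((q.comp φ).eqLocus (q.comp ψ) : Set (MvPowerSeries σ R)) := by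
    have hset : ((q.comp φ).eqLocus (q.comp ψ) : Set (MvPowerSeries σ R)) =
        ⋂ k ∈ Set.Iio n, {g | PowerSeries.coeff k (φ g) = PowerSeries.coeff k (ψ g)} := by
      ext g
      simp [hmem, PowerSeries.X_pow_dvd_iff, sub_eq_zero]
    rw [hset]
    exact isClosed_biInter fun k _ => isClosed_eq
      ((PowerSeries.WithPiTopology.continuous_coeff K k).comp hφ)
      ((PowerSeries.WithPiTopology.continuous_coeff K k).comp hψ)
  rw [← hmem, subring_eq_top_of_isClosed hR hclosed fun i => (hmem _).2 (hX i)]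
  trivial

end MvPowerSeries

open MvPowerSeries

theorem stmt_3_general (p : ℕ) [Fact p.Prime]
    (F : Type*) [Field F] [CharP F p]
    (lam : MvPowerSeries (Fin 2) ℤ_[p])
    (χ μ : MvPowerSeries (Fin 2) ℤ_[p] →+* PowerSeries F)
    (hχcont : @Continuous _ _ (mvTop p) (psTop F) χ)
    (hμcont : @Continuous _ _ (mvTop p) (psTop F) μ)
    (hχ1 : χ (MvPowerSeries.X 0) = 0)
    (m : ℕ) (hm : (χ lam).order = m)
    (j : ℕ)
    (hμ1 : μ (1 + MvPowerSeries.X 0) = μ ((1 + MvPowerSeries.X 1) ^ (p ^ j)))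
    (hμ2 : μ (MvPowerSeries.X 1) = χ (MvPowerSeries.X 1))
    (hj : p ^ j > m) :
    μ lam ≠ 0 := by
  -- the coefficient topology underlying `psTop F`
  let : TopologicalSpace F := ⊥
  have : DiscreteTopology F := ⟨rfl⟩
  have : CharP (PowerSeries F) p := charP_of_injective_ringHom PowerSeries.C_injective p
  have hμX0 : μ (X 0) = χ (X 1) ^ p ^ j := by
    rw [map_add, map_one, map_pow, map_add, map_one, add_pow_char_pow, one_pow, hμ2] at hμ1
    exact add_left_cancel hμ1
  have hX : ∀ i, PowerSeries.X ^ p ^ j ∣ χ (X i) - μ (X i) := by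
    intro i
    fin_cases i
    · simpa [hχ1, hμX0] using pow_dvd_pow_of_dvd (X_dvd_map_X hχcont 1) (p ^ j)
    · simp [hμ2]
  have hcoeff := (PowerSeries.X_pow_dvd_iff.1
    (X_pow_dvd_map_sub_map PadicInt.denseRange_intCast hχcont hμcont hX lam)) m hj
  intro hμlam
  rw [hμlam, sub_zero] at hcoeff
  exact (PowerSeries.order_eq_nat.1 hm).1 hcoeff

/-- Let `χ : ℤ_p[[t₁,t₂]] → F[[t]]` be a continuous ring homomorphism with
`χ(t₁) = 0` and `χ(λ) ≠ 0` of `t`-adic valuation `m`.  If `μ` is a continuous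
ring homomorphism with `μ(1+t₁) = μ((1+t₂)^(p^j))`, `μ(t₂) = χ(t₂)` and
`p^j > m`, then `μ(λ) ≠ 0`. -/
theorem stmt_3 (p : ℕ) [Fact p.Prime]
    (F : Type*) [Field F] [IsAlgClosed F] [CharP F p]
    (lam : MvPowerSeries (Fin 2) ℤ_[p])
    (χ μ : MvPowerSeries (Fin 2) ℤ_[p] →+* PowerSeries F)
    (hχcont : @Continuous _ _ (mvTop p) (psTop F) χ)
    (hμcont : @Continuous _ _ (mvTop p) (psTop F) μ)
    (hχ1 : χ (MvPowerSeries.X 0) = 0)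
    (hχlam : χ lam ≠ 0)
    (m : ℕ) (hm : (χ lam).order = m)
    (j : ℕ)
    (hμ1 : μ (1 + MvPowerSeries.X 0) = μ ((1 + MvPowerSeries.X 1) ^ (p ^ j)))
    (hμ2 : μ (MvPowerSeries.X 1) = χ (MvPowerSeries.X 1))
    (hj : p ^ j > m) :
    μ lam ≠ 0 :=
  stmt_3_general p F lam χ μ hχcont hμcont hχ1 m hm j hμ1 hμ2 hj
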